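/- Let g be a positive definite Hermitian n×n matrix and g₀ a positive definite Hermitian n×n matrix. Then tr(g₀⁻¹ g) ≤ (1/(n−1)!) · (tr(g⁻¹ g₀))^{n−1} · (det g / det g₀). -/

import Mathlib

open scoped ComplexOrder

/-! Congruence by `g₀^{-1/2}` turns `g` into a positive definite `A` with eigenvalues `λᵢ > 0`, and
the three quantities become `tr(g₀⁻¹g) = Σ λᵢ`, `tr(g⁻¹g₀) = Σ λᵢ⁻¹` and `det g / det g₀ = Π λᵢ`.
Writing `λᵢ = (Π λ) · Π_{j ≠ i} λⱼ⁻¹`, the claim is `e_{n-1}(μ) ≤ (Σ μ)^{n-1} / (n-1)!` for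
`μ = λ⁻¹`, which holds because each monomial of `e_{n-1}` occurs `(n-1)!` times in the expansion
of `(Σ μ)^{n-1}`. -/

section Scalar

open Finset Nat

theorem Fin.injective_succAbove_comp_perm (m : ℕ) :
    Function.Injective fun p : Fin (m + 1) × Equiv.Perm (Fin m) ↦ p.1.succAbove ∘ p.2 := by
  rintro ⟨i, σ⟩ ⟨i', σ'⟩ h
  have hrange : Set.range (i.succAbove ∘ σ) = Set.range (i'.succAbove ∘ σ') := congrArg _ h
  rw [σ.surjective.range_comp, σ'.surjective.range_comp, Fin.range_succAbove,
    Fin.range_succAbove, compl_inj_iff, Set.singleton_eq_singleton_iff] at hrange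
  subst hrange
  exact Prod.ext rfl (Equiv.ext fun k ↦ Fin.succAbove_right_injective (congrFun h k))

theorem factorial_mul_sum_prod_succAbove_le_sum_pow {R : Type*} [CommSemiring R] [PartialOrder R]
    [IsOrderedRing R] (m : ℕ) {x : Fin (m + 1) → R} (hx : ∀ i, 0 ≤ x i) :
    m ! * ∑ i : Fin (m + 1), ∏ k : Fin m, x (i.succAbove k) ≤ (∑ i, x i) ^ m := by
  have hperm (i : Fin (m + 1)) (σ : Equiv.Perm (Fin m)) :
      ∏ k, x (i.succAbove (σ k)) = ∏ k, x (i.succAbove k) :=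
    Equiv.prod_comp σ fun k ↦ x (i.succAbove k)
  calc (m ! : R) * ∑ i : Fin (m + 1), ∏ k : Fin m, x (i.succAbove k)
      = ∑ p : Fin (m + 1) × Equiv.Perm (Fin m), ∏ k, x ((p.1.succAbove ∘ p.2) k) := by
        rw [Fintype.sum_prod_type, mul_sum]
        exact sum_congr rfl fun i _ ↦ by simp [hperm, Fintype.card_perm]
    _ = ∑ p ∈ univ.image fun p : Fin (m + 1) × Equiv.Perm (Fin m) ↦ p.1.succAbove ∘ p.2,
          ∏ k, x (p k) := by
        rw [sum_image fun _ _ _ _ h ↦ Fin.injective_succAbove_comp_perm m h]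
    _ ≤ ∑ p : Fin m → Fin (m + 1), ∏ k, x (p k) :=
        sum_le_sum_of_subset_of_nonneg (subset_univ _) fun _ _ _ ↦ prod_nonneg fun _ _ ↦ hx _
    _ = (∑ i, x i) ^ m := (Fintype.sum_pow x m).symm

theorem sum_le_inv_factorial_mul_sum_inv_pow_mul_prod {K : Type*} [Field K] [LinearOrder K]
    [IsStrictOrderedRing K] (m : ℕ) {t : Fin (m + 1) → K} (ht : ∀ i, 0 < t i) :
    ∑ i, t i ≤ 1 / m ! * (∑ i, (t i)⁻¹) ^ m * ∏ i, t i := by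
  have hprod : 0 < ∏ i, t i := prod_pos fun i _ ↦ ht i
  have ht_eq (i : Fin (m + 1)) : t i = (∏ j, t j) * ∏ k, (t (i.succAbove k))⁻¹ := by
    rw [prod_inv_distrib, Fin.prod_univ_succAbove t i, mul_assoc,
      mul_inv_cancel₀ (prod_pos fun k _ ↦ ht _).ne', mul_one]
  calc ∑ i, t i = (∏ j, t j) * ∑ i : Fin (m + 1), ∏ k : Fin m, (t (i.succAbove k))⁻¹ := by
        rw [mul_sum]; exact sum_congr rfl fun i _ ↦ ht_eq i
    _ ≤ (∏ j, t j) * (1 / m ! * (∑ i, (t i)⁻¹) ^ m) := by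
        gcongr
        rw [div_mul_eq_mul_div, one_mul, le_div_iff₀ (by positivity), mul_comm]
        exact factorial_mul_sum_prod_succAbove_le_sum_pow m fun i ↦ (inv_pos.2 (ht i)).le
    _ = 1 / m ! * (∑ i, (t i)⁻¹) ^ m * ∏ i, t i := by ring

end Scalar

namespace Matrix

variable {𝕜 n : Type*} [RCLike 𝕜] [Fintype n] [DecidableEq n]

theorem IsHermitian.trace_cfc {A : Matrix n n 𝕜} (hA : A.IsHermitian) (f : ℝ → ℝ) :
    (cfc f A).trace = ∑ i, (f (hA.eigenvalues i) : 𝕜) := by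
  rw [hA.cfc_eq, IsHermitian.cfc, Unitary.conjStarAlgAut_apply, trace_mul_cycle,
    Unitary.coe_star_mul_self, one_mul, trace_diagonal]
  rfl

theorem PosDef.trace_inv {A : Matrix n n 𝕜} (hA : A.PosDef) :
    A⁻¹.trace = ∑ i, (hA.1.eigenvalues i : 𝕜)⁻¹ := by
  have := cfc_ringInverse_id (R := ℝ) A hA.isUnit hA.1
  rw [← nonsing_inv_eq_ringInverse] at this
  rw [← this, hA.1.trace_cfc]
  simp

variable {K : Type*} [Field K] {g g₀ S : Matrix n n K}

theorem trace_inv_mul_eq_trace_inv_mul_mul_inv (hS : S * S = g₀) :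
    (g₀⁻¹ * g).trace = (S⁻¹ * g * S⁻¹).trace := by
  rw [← hS, mul_inv_rev, trace_mul_cycle S⁻¹ g S⁻¹]

theorem trace_inv_mul_eq_trace_inv_inv_mul_mul_inv (hS : S * S = g₀) (hSdet : IsUnit S.det) :
    (g⁻¹ * g₀).trace = (S⁻¹ * g * S⁻¹)⁻¹.trace := by
  rw [mul_inv_rev, mul_inv_rev, nonsing_inv_nonsing_inv S hSdet, ← hS, ← Matrix.mul_assoc,
    trace_mul_cycle, Matrix.mul_assoc]

theorem det_inv_mul_mul_inv (hS : S * S = g₀) : (S⁻¹ * g * S⁻¹).det = g.det / g₀.det := by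
  rw [det_mul, det_mul, det_nonsing_inv, Ring.inverse_eq_inv', ← hS, det_mul]
  ring

end Matrix

/-- For positive definite Hermitian `n×n` matrices `g, g₀`:
`tr(g₀⁻¹ g) ≤ (1/(n−1)!) · (tr(g⁻¹ g₀))^{n−1} · (det g / det g₀)`. -/
theorem stmt_3 (n : ℕ) (hn : 1 ≤ n) (g g₀ : Matrix (Fin n) (Fin n) ℂ)
    (hg : g.PosDef) (hg₀ : g₀.PosDef) :
    (Matrix.trace (g₀⁻¹ * g)).re ≤
      (1 / (Nat.factorial (n - 1) : ℝ)) * ((Matrix.trace (g⁻¹ * g₀)).re) ^ (n - 1) *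
        (g.det.re / g₀.det.re) := by
  obtain ⟨m, rfl⟩ : ∃ m, n = m + 1 := ⟨n - 1, by omega⟩
  obtain ⟨S, hSH, hSS⟩ : ∃ S : Matrix (Fin (m + 1)) (Fin (m + 1)) ℂ, S.IsHermitian ∧ S * S = g₀ :=
    open scoped MatrixOrder in
    ⟨CFC.sqrt g₀, (CFC.sqrt_nonneg g₀).isSelfAdjoint,
      CFC.sqrt_mul_sqrt_self g₀ hg₀.posSemidef.nonneg⟩
  have hSdet : IsUnit S.det := by
    refine isUnit_of_mul_isUnit_left (y := S.det) ?_
    rw [← Matrix.det_mul, hSS]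
    exact hg₀.isUnit.map Matrix.detMonoidHom
  have hA : (S⁻¹ * g * S⁻¹).PosDef := by
    have hSinv : IsUnit S⁻¹ := S.isUnit_nonsing_inv_iff.2 (S.isUnit_iff_isUnit_det.2 hSdet)
    simpa only [hSH.inv.eq] using
      hg.conjTranspose_mul_mul_same (Matrix.mulVec_injective_of_isUnit hSinv)
  have hdet : g.det.re / g₀.det.re = (S⁻¹ * g * S⁻¹).det.re := by
    rw [Matrix.det_inv_mul_mul_inv hSS, Complex.eq_re_of_ofReal_le hg₀.det_pos.le,
      Complex.div_ofReal_re, Complex.ofReal_re]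
  rw [Nat.add_sub_cancel, Matrix.trace_inv_mul_eq_trace_inv_mul_mul_inv hSS,
    Matrix.trace_inv_mul_eq_trace_inv_inv_mul_mul_inv hSS hSdet, hdet,
    hA.1.trace_eq_sum_eigenvalues, hA.trace_inv, hA.1.det_eq_prod_eigenvalues]
  simpa [← Complex.ofReal_prod] using
    sum_le_inv_factorial_mul_sum_inv_pow_mul_prod m hA.eigenvalues_pos
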